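/- (Conditional form of the main gradient-estimation theorem.) Let f : ℝⁿ → ℝ be continuously differentiable and x ∈ ℝⁿ. Let A be an m×n real matrix (m ≥ 2) with rows a₁,…,aₘ, and let t > 0, τ > 0. Assume A has the robust ℓ1-recovery property at ∇f(x): for every y ∈ ℝᵐ with ‖A∇f(x) − y‖₂ ≤ t, every minimizer ẑ of ‖z‖₁ over {z ∈ ℝⁿ : ‖Az − y‖₂ ≤ t} satisfies ‖ẑ − ∇f(x)‖₂ ≤ 2t/τ. Let δ > 0, C ≥ maxᵢ|⟨∇f(x), aᵢ⟩|, and K ≥ 0 be such that for every Δ ∈ {−1,1}ᵐ and every i, |(f(x + δΣⱼΔⱼaⱼ) − f(x))/(δΔᵢ) − ⟨∇f(x), aᵢ⟩ − Σ_{j≠i}ΔⱼΔᵢ⟨∇f(x), aⱼ⟩| ≤ Kδ. Suppose t > 2mKδ, 0 < ε < 1, and k ≥ (8m²(m−1)C²/t²)·log(2/ε). Let Δ¹,…,Δᵏ be independent uniform random vectors on {−1,1}ᵐ and let ȳ ∈ ℝᵐ have coordinates ȳᵢ = (1/k)Σ_{l=1}^{k}(f(x + δΣⱼΔⱼˡaⱼ)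 − f(x))/(δΔᵢˡ). Then with probability at least 1 − εm, every minimizer ∇̃f of ‖z‖₁ over {z : ‖Az − ȳ‖₂ ≤ t} satisfies ‖∇̃f − ∇f(x)‖₂ ≤ 2t/τ. -/

import Mathlib

/-!
If, for every coordinate `i`, the cross term `∑ₗ ∑_{j ≠ i} Δⱼˡ Δᵢˡ ⟨∇f(x), aⱼ⟩` is at most
`kt/(2m)` in absolute value, then together with the remainder bound `Kδ < t/(2m)` every
coordinate of `ȳ` is within `t/m` of `⟨aᵢ, ∇f(x)⟩`, so `‖A∇f(x) - ȳ‖₂ ≤ t` and robust recovery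
applies. Replacing `Δⱼˡ` by `Δⱼˡ Δᵢˡ` for `j ≠ i` is a bijection of the sample space, so for fixed
`i` the cross term is a Rademacher sum with variance proxy `k(m-1)C²`; Hoeffding's inequality
bounds its failure probability by `ε` for the given `k`, and a union bound over `i` gives `εm`.
-/

open scoped RealInnerProductSpace

open Finset Real

def boolSign (b : Bool) : ℝ := if b then 1 else -1

lemma boolSign_beq (b c : Bool) : boolSign (b == c) = boolSign b * boolSign c := by
  cases b <;> cases c <;> norm_num [boolSign]

section Rademacher

variable {ι : Type*} [Fintype ι] [DecidableEq ι]

lemma sum_exp_sum_boolSign_mul (c : ι → ℝ) :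
    ∑ η : ι → Bool, exp (∑ i, boolSign (η i) * c i) = ∏ i, 2 * cosh (c i) := by
  simp_rw [exp_sum, Fintype.prod_sum (fun i b => exp (boolSign b * c i)) |>.symm,
    Fintype.sum_bool, boolSign, cosh_eq]
  congr with i
  simp only [↓reduceIte, one_mul, Bool.false_eq_true, neg_mul]
  ring

/-- Hoeffding's inequality for Rademacher sums, by Chernoff's method and
`cosh x ≤ exp (x ^ 2 / 2)`. -/
lemma card_le_sum_boolSign_mul_le (c : ι → ℝ) {a V : ℝ} (ha : 0 ≤ a) (hV : 0 < V)
    (hc : ∑ i, c i ^ 2 ≤ V) :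
    (#{η : ι → Bool | a ≤ ∑ i, boolSign (η i) * c i} : ℝ) ≤
      2 ^ Fintype.card ι * exp (-(a ^ 2) / (2 * V)) := by
  set s : ℝ := a / V with hs_def
  have hs : 0 ≤ s := div_nonneg ha hV.le
  have markov : (#{η : ι → Bool | a ≤ ∑ i, boolSign (η i) * c i} : ℝ) * exp (s * a) ≤
      ∑ η : ι → Bool, exp (∑ i, boolSign (η i) * (s * c i)) := by
    rw [← nsmul_eq_mul]
    refine (card_nsmul_le_sum _ _ _ fun η hη => ?_).trans
      (sum_le_sum_of_subset_of_nonneg (filter_subset _ _) fun _ _ _ => (exp_pos _).le)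
    simp_rw [mul_left_comm _ s, ← mul_sum]
    exact exp_le_exp.2 (mul_le_mul_of_nonneg_left (mem_filter.1 hη).2 hs)
  have mgf : ∑ η : ι → Bool, exp (∑ i, boolSign (η i) * (s * c i)) ≤
      2 ^ Fintype.card ι * exp (s ^ 2 * V / 2) := by
    rw [sum_exp_sum_boolSign_mul]
    calc ∏ i, 2 * cosh (s * c i) ≤ ∏ i, 2 * exp ((s * c i) ^ 2 / 2) :=
          prod_le_prod (fun _ _ => by positivity) fun i _ =>
            mul_le_mul_of_nonneg_left (cosh_le_exp_half_sq _) zero_le_two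
      _ = 2 ^ Fintype.card ι * exp (s ^ 2 * ∑ i, c i ^ 2 / 2) := by
          rw [prod_mul_distrib, prod_const, card_univ, ← exp_sum, mul_sum]
          simp_rw [mul_pow, mul_div_assoc]
      _ ≤ 2 ^ Fintype.card ι * exp (s ^ 2 * V / 2) := by
          rw [← sum_div, ← mul_div_assoc]
          gcongr
  have hexp : 2 ^ Fintype.card ι * exp (s ^ 2 * V / 2) =
      2 ^ Fintype.card ι * exp (-(a ^ 2) / (2 * V)) * exp (s * a) := by
    rw [mul_assoc, ← exp_add]
    congr 2
    rw [hs_def]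
    field_simp
    ring
  exact le_of_mul_le_mul_right (hexp ▸ markov.trans mgf) (exp_pos _)

lemma card_le_abs_sum_boolSign_mul_le (c : ι → ℝ) {a V : ℝ} (ha : 0 ≤ a) (hV : 0 < V)
    (hc : ∑ i, c i ^ 2 ≤ V) :
    (#{η : ι → Bool | a ≤ |∑ i, boolSign (η i) * c i|} : ℝ) ≤
      2 * 2 ^ Fintype.card ι * exp (-(a ^ 2) / (2 * V)) := by
  have hneg : ∀ η : ι → Bool,
      -∑ i, boolSign (η i) * c i = ∑ i, boolSign (η i) * (-c i) := by
    simp only [mul_neg, sum_neg_distrib, implies_true]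
  simp_rw [le_abs, hneg, filter_or]
  calc _ ≤ (#{η : ι → Bool | a ≤ ∑ i, boolSign (η i) * c i} : ℝ) +
        #{η : ι → Bool | a ≤ ∑ i, boolSign (η i) * (-c i)} := by exact_mod_cast card_union_le _ _
    _ ≤ _ := by
      rw [two_mul, add_mul]
      gcongr
      · exact card_le_sum_boolSign_mul_le _ ha hV hc
      · exact card_le_sum_boolSign_mul_le _ ha hV (by simpa using hc)

end Rademacher

section CrossSum

variable {ι κ : Type*} [Fintype ι] [Fintype κ] [DecidableEq κ]

def crossSum (g : κ → ℝ) (i : κ) (σ : ι → κ → Bool) : ℝ :=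
  ∑ l, ∑ j ∈ univ.erase i, boolSign (σ l j) * boolSign (σ l i) * g j

/-- In sign notation, `Δⱼ ↦ Δⱼ Δᵢ` for `j ≠ i` in every sample. -/
def flipSigns (i : κ) (σ : ι → κ → Bool) : ι → κ → Bool :=
  fun l j => if j = i then σ l i else (σ l j == σ l i)

omit [Fintype ι] [Fintype κ] in
lemma flipSigns_involutive (i : κ) : Function.Involutive (flipSigns (ι := ι) i) := by
  intro σ
  funext l j
  by_cases hj : j = i
  · simp [flipSigns, hj]
  · simp only [flipSigns, hj, if_false, if_true]
    cases σ l j <;> cases σ l i <;> rfl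

/-- Since `flipSigns i` is a bijection, the products `Δⱼ Δᵢ`, `j ≠ i`, are themselves independent
uniform signs. -/
lemma crossSum_eq_sum_flipSigns (g : κ → ℝ) (i : κ) (σ : ι → κ → Bool) :
    crossSum g i σ =
      ∑ p : ι × κ, boolSign (flipSigns i σ p.1 p.2) * Function.update g i 0 p.2 := by
  rw [crossSum, Fintype.sum_prod_type]
  refine sum_congr rfl fun l _ => ?_
  rw [← sum_erase_add _ _ (mem_univ i), Function.update_self, mul_zero, add_zero]
  refine sum_congr rfl fun j hj => ?_
  have hji := ne_of_mem_erase hj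
  simp [flipSigns, hji, boolSign_beq]

lemma card_le_abs_crossSum_le [DecidableEq ι] (g : κ → ℝ) (i : κ) {a V : ℝ} (ha : 0 ≤ a)
    (hV : 0 < V) (hg : Fintype.card ι * ∑ j ∈ univ.erase i, g j ^ 2 ≤ V) :
    (#{σ : ι → κ → Bool | a ≤ |crossSum g i σ|} : ℝ) ≤
      2 * 2 ^ (Fintype.card ι * Fintype.card κ) * exp (-(a ^ 2) / (2 * V)) := by
  let e : (ι → κ → Bool) ≃ (ι × κ → Bool) :=
    (flipSigns_involutive i).toPerm.trans (Equiv.curry ι κ Bool).symm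
  have hcard : #{σ : ι → κ → Bool | a ≤ |crossSum g i σ|} =
      #{η : ι × κ → Bool | a ≤ |∑ p, boolSign (η p) * Function.update g i 0 p.2|} := by
    refine card_equiv e fun σ => ?_
    simp only [mem_filter, mem_univ, true_and, crossSum_eq_sum_flipSigns]
    rfl
  have hV' : ∑ p : ι × κ, Function.update g i 0 p.2 ^ 2 ≤ V := by
    simp only [Fintype.sum_prod_type, sum_const, card_univ, nsmul_eq_mul]
    rw [← sum_erase_add _ _ (mem_univ i), Function.update_self]
    rwa [zero_pow two_ne_zero, add_zero,
      sum_congr rfl fun j hj => by rw [Function.update_of_ne (ne_of_mem_erase hj)]]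
  rw [hcard, ← Fintype.card_prod]
  exact card_le_abs_sum_boolSign_mul_le _ ha hV hV'

end CrossSum

lemma card_le_card_forall_add_sum_card_not {α κ : Type*} [Fintype α] [Fintype κ]
    (P : κ → α → Prop) [∀ i, DecidablePred (P i)] [DecidablePred fun x => ∀ i, P i x] :
    Fintype.card α ≤ #{x | ∀ i, P i x} + ∑ i, #{x | ¬ P i x} := by
  classical
  rw [← card_univ, ← card_filter_add_card_filter_not (s := univ) (fun x => ∀ i, P i x)]
  gcongr
  refine (card_le_card fun x hx => ?_).trans card_biUnion_le
  obtain ⟨i, hi⟩ := not_forall.1 (mem_filter.1 hx).2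
  exact mem_biUnion.2 ⟨i, mem_univ _, mem_filter.2 ⟨mem_univ _, hi⟩⟩

lemma sum_erase_sq_le {m : ℕ} (g : Fin m → ℝ) {C : ℝ} (hC : ∀ j, |g j| ≤ C) (i : Fin m) :
    ∑ j ∈ univ.erase i, g j ^ 2 ≤ ((m : ℝ) - 1) * C ^ 2 := by
  have hcard : ((univ.erase i).card : ℝ) = m - 1 := by
    rw [card_erase_of_mem (mem_univ i), card_univ, Fintype.card_fin,
      Nat.cast_sub (Nat.one_le_of_lt i.pos), Nat.cast_one]
  rw [← hcard, ← nsmul_eq_mul]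
  exact sum_le_card_nsmul _ _ _ fun j _ => sq_le_sq' (abs_le.1 (hC j)).1 (abs_le.1 (hC j)).2

lemma card_forall_abs_crossSum_le_ge {k m : ℕ} (hk0 : 0 < k) (g : Fin m → ℝ) {C t ε : ℝ}
    (hC : ∀ i, |g i| ≤ C) (ht : 0 < t) (hε0 : 0 < ε) (hε2 : ε < 2)
    (hk : (k : ℝ) ≥ 8 * (m : ℝ) ^ 2 * ((m : ℝ) - 1) * C ^ 2 / t ^ 2 * log (2 / ε)) :
    (1 - ε * m) * 2 ^ (k * m) ≤
      #{σ : Fin k → Fin m → Bool | ∀ i, |crossSum g i σ| ≤ k * t / (2 * m)} := by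
  set L := log (2 / ε)
  have hL : 0 < L := log_pos (by rw [lt_div_iff₀ hε0]; linarith)
  set r : ℝ := k * t / (2 * m)
  have hbad : ∀ i : Fin m, (#{σ : Fin k → Fin m → Bool | ¬ |crossSum g i σ| ≤ r} : ℝ) ≤
      ε * 2 ^ (k * m) := by
    intro i
    have hm : (0 : ℝ) < m := Nat.cast_pos.2 i.pos
    have hr : 0 < r := by positivity
    have hV : 0 < r ^ 2 / (2 * L) := by positivity
    have hvar : (k : ℝ) * ∑ j ∈ univ.erase i, g j ^ 2 ≤ r ^ 2 / (2 * L) := by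
      rw [ge_iff_le, div_mul_eq_mul_div, div_le_iff₀ (by positivity)] at hk
      calc (k : ℝ) * ∑ j ∈ univ.erase i, g j ^ 2 ≤ k * (((m : ℝ) - 1) * C ^ 2) :=
            mul_le_mul_of_nonneg_left (sum_erase_sq_le g hC i) (Nat.cast_nonneg _)
        _ ≤ r ^ 2 / (2 * L) := by
            have := mul_le_mul_of_nonneg_left hk (Nat.cast_nonneg k)
            rw [le_div_iff₀ (by positivity), div_pow, le_div_iff₀ (by positivity)]
            linarith
    have hexp : exp (-(r ^ 2) / (2 * (r ^ 2 / (2 * L)))) = ε / 2 := by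
      rw [show -(r ^ 2) / (2 * (r ^ 2 / (2 * L))) = -L by field_simp, exp_neg,
        exp_log (by positivity), inv_div]
    calc (#{σ : Fin k → Fin m → Bool | ¬ |crossSum g i σ| ≤ r} : ℝ)
        ≤ #{σ : Fin k → Fin m → Bool | r ≤ |crossSum g i σ|} := by
          exact_mod_cast card_le_card fun σ hσ => by
            simp only [mem_filter, mem_univ, true_and, not_le] at hσ ⊢
            exact hσ.le
      _ ≤ 2 * 2 ^ (k * m) * (ε / 2) := by
          simpa [hexp] using
            card_le_abs_crossSum_le (ι := Fin k) g i hr.le hV (by rwa [Fintype.card_fin])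
      _ = ε * 2 ^ (k * m) := by ring
  have hspace : Fintype.card (Fin k → Fin m → Bool) = 2 ^ (k * m) := by
    simp [← pow_mul, mul_comm]
  have hunion : (2 : ℝ) ^ (k * m) ≤ #{σ : Fin k → Fin m → Bool | ∀ i, |crossSum g i σ| ≤ r} +
      ∑ i, (#{σ : Fin k → Fin m → Bool | ¬ |crossSum g i σ| ≤ r} : ℝ) := by
    have := card_le_card_forall_add_sum_card_not (α := Fin k → Fin m → Bool)
      (fun i σ => |crossSum g i σ| ≤ r)
    rw [hspace] at this
    exact_mod_cast this
  have hbad_sum := sum_le_sum fun i (_ : i ∈ univ) => hbad i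
  simp only [sum_const, card_univ, Fintype.card_fin, nsmul_eq_mul] at hbad_sum
  linarith

lemma norm_equiv_symm_sub_le {ι : Type*} [Fintype ι] (u v : ι → ℝ) {r : ℝ} (hr : 0 ≤ r)
    (h : ∀ i, |u i - v i| ≤ r) :
    ‖(WithLp.equiv 2 (ι → ℝ)).symm u - (WithLp.equiv 2 (ι → ℝ)).symm v‖ ≤
      Fintype.card ι * r := by
  rw [EuclideanSpace.norm_eq, sqrt_le_left (by positivity)]
  calc ∑ i, ‖((WithLp.equiv 2 (ι → ℝ)).symm u - (WithLp.equiv 2 (ι → ℝ)).symm v) i‖ ^ 2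
      ≤ ∑ _i : ι, r ^ 2 := sum_le_sum fun i _ => by
        simpa using pow_le_pow_left₀ (abs_nonneg _) (h i) 2
    _ = Fintype.card ι * r ^ 2 := by simp
    _ ≤ (Fintype.card ι * r) ^ 2 := by
        rw [mul_pow]
        gcongr
        exact_mod_cast Nat.le_self_pow two_ne_zero _

lemma abs_average_sub_le {k : ℕ} (hk : 0 < k) (u w : Fin k → ℝ) {c B : ℝ}
    (h : ∀ l, |u l - c - w l| ≤ B) :
    |(1 / (k : ℝ)) * ∑ l, u l - c| ≤ B + |∑ l, w l| / k := by
  have hk' : (0 : ℝ) < k := Nat.cast_pos.2 hk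
  have hsplit : (1 / (k : ℝ)) * ∑ l, u l - c = (∑ l, (u l - c - w l)) / k + (∑ l, w l) / k := by
    simp only [sum_sub_distrib, sum_const, card_univ, Fintype.card_fin, nsmul_eq_mul]
    field_simp
    ring
  have hsum : |∑ l, (u l - c - w l)| ≤ k * B :=
    (abs_sum_le_sum_abs _ _).trans ((sum_le_sum fun l _ => h l).trans_eq (by simp))
  rw [hsplit]
  calc _ ≤ |∑ l, (u l - c - w l)| / k + |∑ l, w l| / k := by
        simpa only [abs_div, abs_of_pos hk'] using
          abs_add_le ((∑ l, (u l - c - w l)) / k) ((∑ l, w l) / k)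
    _ ≤ B + |∑ l, w l| / k := by
        gcongr
        rwa [div_le_iff₀ hk', mul_comm]

section SimultaneousPerturbation

variable {κ : Type*} [Fintype κ] [DecidableEq κ]

/-- The averaged measurement `ȳᵢ` of `k` simultaneous perturbation quotients `q Δ i`, for the sign
vectors `Δˡⱼ = boolSign (σ l j)`. -/
noncomputable def spAverage {k : ℕ} (q : (κ → ℝ) → κ → ℝ) (σ : Fin k → κ → Bool) (i : κ) : ℝ :=
  (1 / (k : ℝ)) * ∑ l, q (fun j => boolSign (σ l j)) i

lemma abs_spAverage_sub_le {k : ℕ} (hk : 0 < k) (q : (κ → ℝ) → κ → ℝ) (g : κ → ℝ) {B : ℝ}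
    (hq : ∀ Δ : κ → ℝ, (∀ j, Δ j = 1 ∨ Δ j = -1) → ∀ i,
      |q Δ i - g i - ∑ j ∈ univ.erase i, Δ j * Δ i * g j| ≤ B)
    (σ : Fin k → κ → Bool) (i : κ) :
    |spAverage q σ i - g i| ≤ B + |crossSum g i σ| / k :=
  abs_average_sub_le hk _ _ fun l => hq _ (fun j => by unfold boolSign; split_ifs <;> simp) i

end SimultaneousPerturbation

lemma card_forall_abs_spAverage_sub_le_ge {k m : ℕ} (hm : 2 ≤ m) (q : (Fin m → ℝ) → Fin m → ℝ)
    (g : Fin m → ℝ) {B C t ε : ℝ}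
    (hq : ∀ Δ : Fin m → ℝ, (∀ j, Δ j = 1 ∨ Δ j = -1) → ∀ i,
      |q Δ i - g i - ∑ j ∈ univ.erase i, Δ j * Δ i * g j| ≤ B)
    (hC : ∀ i, |g i| ≤ C) (hB : 2 * m * B < t) (ht : 0 < t) (hε0 : 0 < ε) (hε1 : ε < 1)
    (hk : (k : ℝ) ≥ 8 * (m : ℝ) ^ 2 * ((m : ℝ) - 1) * C ^ 2 / t ^ 2 * log (2 / ε)) :
    (1 - ε * m) * 2 ^ (k * m) ≤
      #{σ : Fin k → Fin m → Bool | ∀ i, |spAverage q σ i - g i| ≤ t / m} := by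
  have hm0 : (0 : ℝ) < m := by positivity
  rcases Nat.eq_zero_or_pos k with rfl | hk0
  · have hL : 0 < log (2 / ε) := log_pos (by rw [lt_div_iff₀ hε0]; linarith)
    have hm1 : (0 : ℝ) < m - 1 := by
      have : (2 : ℝ) ≤ m := by exact_mod_cast hm
      linarith
    -- with no samples, the sample-size bound forces `C = 0`
    have hC0 : C = 0 := by
      have hP : 0 < 8 * (m : ℝ) ^ 2 * ((m : ℝ) - 1) / t ^ 2 * log (2 / ε) := by positivity
      rw [Nat.cast_zero, show 8 * (m : ℝ) ^ 2 * ((m : ℝ) - 1) * C ^ 2 / t ^ 2 * log (2 / ε) =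
        8 * (m : ℝ) ^ 2 * ((m : ℝ) - 1) / t ^ 2 * log (2 / ε) * C ^ 2 by ring] at hk
      exact pow_eq_zero_iff two_ne_zero |>.1 <|
        le_antisymm (nonpos_of_mul_nonpos_right hk hP) (sq_nonneg C)
    have hg : ∀ i, g i = 0 := fun i => abs_nonpos_iff.1 (hC0 ▸ hC i)
    rw [filter_true_of_mem fun σ _ i => by simpa [spAverage, hg] using div_nonneg ht.le hm0.le]
    simp only [zero_mul, pow_zero, mul_one, univ_unique, card_singleton, Nat.cast_one]
    linarith [mul_pos hε0 hm0]
  · calc (1 - ε * m) * 2 ^ (k * m)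
        ≤ #{σ : Fin k → Fin m → Bool | ∀ i, |crossSum g i σ| ≤ k * t / (2 * m)} :=
          card_forall_abs_crossSum_le_ge hk0 g hC ht hε0 (by linarith) hk
      _ ≤ #{σ : Fin k → Fin m → Bool | ∀ i, |spAverage q σ i - g i| ≤ t / m} := by
          refine Nat.cast_le.2 (card_le_card fun σ hσ => mem_filter.2 ⟨mem_univ σ, fun i => ?_⟩)
          have hσ := (mem_filter.1 hσ).2
          have hk' : (0 : ℝ) < k := Nat.cast_pos.2 hk0
          calc |spAverage q σ i - g i| ≤ B + |crossSum g i σ| / k :=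
                abs_spAverage_sub_le hk0 q g hq σ i
            _ ≤ B + t / (2 * m) :=
                add_le_add_right ((div_le_iff₀ hk').2 ((hσ i).trans_eq
                  (by ring : (k : ℝ) * t / (2 * m) = t / (2 * m) * k))) B
            _ ≤ t / m := by
                have : B < t / (2 * m) := by rw [lt_div_iff₀ (by positivity)]; linarith
                linarith [show t / m = t / (2 * m) + t / (2 * m) by field_simp; ring]

theorem stmt_7_general (n m k : ℕ) (hm : 2 ≤ m)
    (f : EuclideanSpace ℝ (Fin n) → ℝ)
    (x : EuclideanSpace ℝ (Fin n))
    (a : Fin m → EuclideanSpace ℝ (Fin n))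
    (t τ : ℝ) (ht0 : 0 < t)
    (hrec : ∀ y : EuclideanSpace ℝ (Fin m),
      ‖(WithLp.equiv 2 (Fin m → ℝ)).symm (fun i => ⟪a i, gradient f x⟫) - y‖ ≤ t →
      ∀ zhat : EuclideanSpace ℝ (Fin n),
        (‖(WithLp.equiv 2 (Fin m → ℝ)).symm (fun i => ⟪a i, zhat⟫) - y‖ ≤ t ∧
          ∀ z : EuclideanSpace ℝ (Fin n),
            ‖(WithLp.equiv 2 (Fin m → ℝ)).symm (fun i => ⟪a i, z⟫) - y‖ ≤ t →
            ∑ i, |zhat i| ≤ ∑ i, |z i|) →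
        ‖zhat - gradient f x‖ ≤ 2 * t / τ)
    (δ C K : ℝ)
    (hC : ∀ i, |⟪gradient f x, a i⟫| ≤ C)
    (hrem : ∀ Δ : Fin m → ℝ, (∀ j, Δ j = 1 ∨ Δ j = -1) → ∀ i : Fin m,
      abs ((f (x + δ • ∑ j, Δ j • a j) - f x) / (δ * Δ i) -
          ⟪gradient f x, a i⟫ -
          ∑ j ∈ Finset.univ.erase i, Δ j * Δ i * ⟪gradient f x, a j⟫) ≤ K * δ)
    (ht : 2 * m * K * δ < t) (ε : ℝ) (hε0 : 0 < ε) (hε1 : ε < 1)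
    (hk : (k : ℝ) ≥ 8 * (m : ℝ) ^ 2 * ((m : ℝ) - 1) * C ^ 2 / t ^ 2 *
      Real.log (2 / ε)) :
    1 - ε * m ≤
      (({σ : Fin k → Fin m → Bool |
        ∀ gtilde : EuclideanSpace ℝ (Fin n),
          (‖(WithLp.equiv 2 (Fin m → ℝ)).symm (fun i => ⟪a i, gtilde⟫) -
              (WithLp.equiv 2 (Fin m → ℝ)).symm (fun i =>
                (1 / (k : ℝ)) * ∑ l, (f (x + δ • ∑ j,
                    (if σ l j then (1 : ℝ) else -1) • a j) - f x) /
                  (δ * (if σ l i then (1 : ℝ) else -1)))‖ ≤ t ∧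
            ∀ z : EuclideanSpace ℝ (Fin n),
              ‖(WithLp.equiv 2 (Fin m → ℝ)).symm (fun i => ⟪a i, z⟫) -
                (WithLp.equiv 2 (Fin m → ℝ)).symm (fun i =>
                  (1 / (k : ℝ)) * ∑ l, (f (x + δ • ∑ j,
                      (if σ l j then (1 : ℝ) else -1) • a j) - f x) /
                    (δ * (if σ l i then (1 : ℝ) else -1)))‖ ≤ t →
              ∑ i, |gtilde i| ≤ ∑ i, |z i|) →
          ‖gtilde - gradient f x‖ ≤ 2 * t / τ}.ncard : ℝ) / 2 ^ (k * m)) := by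
  have hgood := card_forall_abs_spAverage_sub_le_ge (k := k) hm
    (fun Δ i => (f (x + δ • ∑ j, Δ j • a j) - f x) / (δ * Δ i)) (fun j => ⟪gradient f x, a j⟫)
    hrem hC (by linarith) ht0 hε0 hε1 hk
  rw [le_div_iff₀ (by positivity)]
  refine hgood.trans ?_
  rw [← Set.ncard_coe_finset]
  refine Nat.cast_le.2 (Set.ncard_le_ncard (fun σ hσ gtilde hgtilde => hrec _ ?_ gtilde hgtilde))
  have hclose := (mem_filter.1 hσ).2
  calc _ ≤ (Fintype.card (Fin m) : ℝ) * (t / m) :=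
        norm_equiv_symm_sub_le _ _ (by positivity) fun i => by
          rw [abs_sub_comm, real_inner_comm]
          exact hclose i
    _ = t := by
        rw [Fintype.card_fin]
        field_simp [show (m : ℝ) ≠ 0 by positivity]

/-- Conditional form of the main gradient-estimation theorem:
if the measurement matrix `A` (with rows `a₁, …, aₘ`, acting by
`(Az)ᵢ = ⟨aᵢ, z⟩`) has the robust `l1`-recovery property at `∇f(x)` with
parameters `t, τ`, the simultaneous perturbation remainder is bounded by `Kδ`,
`|⟨∇f(x), aᵢ⟩| ≤ C`, `t > 2mKδ`, `0 < ε < 1`, and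
`k ≥ (8m²(m-1)C²/t²)·log(2/ε)`, then with probability at least `1 - εm` over the
independent uniform sign vectors `Δ¹, …, Δᵏ` on `{-1,1}ᵐ` (encoded by
`σ : Fin k → Fin m → Bool`, sign `if · then 1 else -1`, probabilities being
cardinalities divided by `2^(k·m)`), every minimizer of `‖z‖₁` over
`{z : ‖Az - ȳ‖₂ ≤ t}` — where `ȳ` is the vector of averaged SP measurements —
is within `2t/τ` of `∇f(x)`. -/
theorem stmt_7 (n m k : ℕ) (hm : 2 ≤ m)
    (f : EuclideanSpace ℝ (Fin n) → ℝ) (hf : ContDiff ℝ 1 f)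
    (x : EuclideanSpace ℝ (Fin n))
    (a : Fin m → EuclideanSpace ℝ (Fin n))
    (t τ : ℝ) (ht0 : 0 < t) (hτ : 0 < τ)
    (hrec : ∀ y : EuclideanSpace ℝ (Fin m),
      ‖(WithLp.equiv 2 (Fin m → ℝ)).symm (fun i => ⟪a i, gradient f x⟫) - y‖ ≤ t →
      ∀ zhat : EuclideanSpace ℝ (Fin n),
        (‖(WithLp.equiv 2 (Fin m → ℝ)).symm (fun i => ⟪a i, zhat⟫) - y‖ ≤ t ∧
          ∀ z : EuclideanSpace ℝ (Fin n),
            ‖(WithLp.equiv 2 (Fin m → ℝ)).symm (fun i => ⟪a i, z⟫) - y‖ ≤ t →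
            ∑ i, |zhat i| ≤ ∑ i, |z i|) →
        ‖zhat - gradient f x‖ ≤ 2 * t / τ)
    (δ C K : ℝ) (hδ : 0 < δ) (hK : 0 ≤ K)
    (hC : ∀ i, |⟪gradient f x, a i⟫| ≤ C)
    (hrem : ∀ Δ : Fin m → ℝ, (∀ j, Δ j = 1 ∨ Δ j = -1) → ∀ i : Fin m,
      abs ((f (x + δ • ∑ j, Δ j • a j) - f x) / (δ * Δ i) -
          ⟪gradient f x, a i⟫ -
          ∑ j ∈ Finset.univ.erase i, Δ j * Δ i * ⟪gradient f x, a j⟫) ≤ K * δ)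
    (ht : 2 * m * K * δ < t) (ε : ℝ) (hε0 : 0 < ε) (hε1 : ε < 1)
    (hk : (k : ℝ) ≥ 8 * (m : ℝ) ^ 2 * ((m : ℝ) - 1) * C ^ 2 / t ^ 2 *
      Real.log (2 / ε)) :
    1 - ε * m ≤
      (({σ : Fin k → Fin m → Bool |
        ∀ gtilde : EuclideanSpace ℝ (Fin n),
          (‖(WithLp.equiv 2 (Fin m → ℝ)).symm (fun i => ⟪a i, gtilde⟫) -
              (WithLp.equiv 2 (Fin m → ℝ)).symm (fun i =>
                (1 / (k : ℝ)) * ∑ l, (f (x + δ • ∑ j,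
                    (if σ l j then (1 : ℝ) else -1) • a j) - f x) /
                  (δ * (if σ l i then (1 : ℝ) else -1)))‖ ≤ t ∧
            ∀ z : EuclideanSpace ℝ (Fin n),
              ‖(WithLp.equiv 2 (Fin m → ℝ)).symm (fun i => ⟪a i, z⟫) -
                (WithLp.equiv 2 (Fin m → ℝ)).symm (fun i =>
                  (1 / (k : ℝ)) * ∑ l, (f (x + δ • ∑ j,
                      (if σ l j then (1 : ℝ) else -1) • a j) - f x) /
                    (δ * (if σ l i then (1 : ℝ) else -1)))‖ ≤ t →
              ∑ i, |gtilde i| ≤ ∑ i, |z i|) →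
          ‖gtilde - gradient f x‖ ≤ 2 * t / τ}.ncard : ℝ) / 2 ^ (k * m)) :=
  stmt_7_general n m k hm f x a t τ ht0 hrec δ C K hC hrem ht ε hε0 hε1 hk
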